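/- Let Σxx, Σ̂xx ∈ ℝ^{dx×dx} and Σyy, Σ̂yy ∈ ℝ^{dy×dy} be symmetric positive definite, let Σxy, Σ̂xy ∈ ℝ^{dx×dy}, and set T = Σxx^{-1/2} Σxy Σyy^{-1/2} and T̂ = Σ̂xx^{-1/2} Σ̂xy Σ̂yy^{-1/2}. Assume ‖T‖ ≤ 1 and ‖T̂‖ ≤ 1, and suppose ‖Σxx^{-1/2}(Σxx^{1/2} − Σ̂xx^{1/2})‖ ≤ a, ‖Σxx^{-1/2}(Σ̂xy − Σxy) Σ̂yy^{-1/2}‖ ≤ ν, and ‖(Σyy^{1/2} − Σ̂yy^{1/2}) Σ̂yy^{-1/2}‖ ≤ b for some a, ν, b ≥ 0. Then ‖T̂ − T‖ ≤ a + ν + b, and consequently the largest singular values satisfy |σ1(T̂) − σ1(T)| ≤ a + ν + b. -/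

import Mathlib

open Matrix Finset

/-- Euclidean norm of a vector in `ℝ^d`. -/
noncomputable def vnorm {n : Type*} [Fintype n] (x : n → ℝ) : ℝ := Real.sqrt (x ⬝ᵥ x)

/-- Spectral (operator) norm of a real matrix: the supremum of `‖A x‖` over unit vectors `x`. -/
noncomputable def specNorm {m n : Type*} [Fintype m] [Fintype n] (A : Matrix m n ℝ) : ℝ :=
  sSup {c : ℝ | ∃ x : n → ℝ, vnorm x = 1 ∧ c = vnorm (A.mulVec x)}

/-- The positive semidefinite square root of a positive semidefinite matrix (the definition
Mathlib had in December 2024, since removed). -/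
noncomputable def Matrix.PosSemidef.sqrt {n : Type*} [Fintype n] [DecidableEq n] {𝕜 : Type*} [RCLike 𝕜]
    [PartialOrder 𝕜]     {A : Matrix n n 𝕜} (hA : A.PosSemidef) : Matrix n n 𝕜 :=
  hA.1.eigenvectorUnitary.1 * diagonal ((↑) ∘ (√·) ∘ hA.1.eigenvalues) *
  (star hA.1.eigenvectorUnitary : Matrix n n 𝕜)

/-!
Writing `P, P̂, Q, Q̂` for the square roots of `Σxx, Σ̂xx, Σyy, Σ̂yy`, one has the exact identity
`T̂ - T = P⁻¹ (P - P̂) T̂ + P⁻¹ (Σ̂xy - Σxy) Q̂⁻¹ + T (Q - Q̂) Q̂⁻¹`.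
The triangle inequality, submultiplicativity of the spectral norm and `‖T‖, ‖T̂‖ ≤ 1` bound the
three terms by `a`, `ν` and `b`; the bound on `|σ₁(T̂) - σ₁(T)|` is the reverse triangle inequality.
-/

open scoped Matrix.Norms.L2Operator

theorem vnorm_eq_norm_toLp {n : Type*} [Fintype n] (x : n → ℝ) :
    vnorm x = ‖WithLp.toLp 2 x‖ := by
  rw [vnorm, EuclideanSpace.norm_eq]
  simp [dotProduct, sq]

theorem specNorm_eq_l2_opNorm {m n : Type*} [Fintype m] [Fintype n] [DecidableEq n]
    (A : Matrix m n ℝ) : specNorm A = ‖A‖ := by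
  rw [l2_opNorm_def, ← ContinuousLinearMap.sSup_sphere_eq_norm, specNorm]
  congr 1
  ext c
  simp only [vnorm_eq_norm_toLp, Set.mem_image, mem_sphere_zero_iff_norm]
  constructor
  · rintro ⟨x, hx, rfl⟩
    exact ⟨WithLp.toLp 2 x, hx, rfl⟩
  · rintro ⟨x, hx, rfl⟩
    exact ⟨x.ofLp, hx, rfl⟩

section
open scoped ComplexOrder
variable {n 𝕜 : Type*} [Fintype n] [DecidableEq n] [RCLike 𝕜]

theorem Matrix.PosSemidef.sqrt_mul_sqrt {A : Matrix n n 𝕜} (hA : A.PosSemidef) :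
    hA.sqrt * hA.sqrt = A := by
  have hU : (star hA.1.eigenvectorUnitary : Matrix n n 𝕜) * hA.1.eigenvectorUnitary = 1 :=
    Unitary.coe_star_mul_self _
  conv_rhs => rw [hA.1.spectral_theorem, Unitary.conjStarAlgAut_apply]
  simp only [Matrix.PosSemidef.sqrt, Matrix.mul_assoc]
  rw [← Matrix.mul_assoc (star _ : Matrix n n 𝕜) _ _, hU, Matrix.one_mul,
    ← Matrix.mul_assoc (diagonal _) (diagonal _), diagonal_mul_diagonal]
  congr 3
  funext i
  simp only [Function.comp_apply, ← RCLike.ofReal_mul,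
    Real.mul_self_sqrt (hA.eigenvalues_nonneg i)]

theorem Matrix.PosDef.isUnit_det_sqrt {A : Matrix n n 𝕜} (hA : A.PosDef) :
    IsUnit hA.posSemidef.sqrt.det := by
  have h : IsUnit (hA.posSemidef.sqrt.det * hA.posSemidef.sqrt.det) := by
    rw [← det_mul, hA.posSemidef.sqrt_mul_sqrt]
    exact hA.isUnit.map detMonoidHom
  exact isUnit_of_mul_isUnit_left h
end

noncomputable def whiten {m n R : Type*} [Fintype m] [DecidableEq m] [Fintype n] [DecidableEq n]
    [CommRing R] (P : Matrix m m R) (S : Matrix m n R) (Q : Matrix n n R) : Matrix m n R :=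
  P⁻¹ * S * Q⁻¹

section
variable {m n : Type*} [Fintype m] [DecidableEq m] [Fintype n] [DecidableEq n]

theorem whiten_sub_whiten {R : Type*} [CommRing R] {P P' : Matrix m m R} {Q Q' : Matrix n n R}
    (hP : IsUnit P.det) (hP' : IsUnit P'.det) (hQ : IsUnit Q.det) (hQ' : IsUnit Q'.det)
    (S S' : Matrix m n R) :
    whiten P' S' Q' - whiten P S Q =
      P⁻¹ * (P - P') * whiten P' S' Q' + P⁻¹ * (S' - S) * Q'⁻¹ +
        whiten P S Q * ((Q - Q') * Q'⁻¹) := by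
  simp only [whiten, Matrix.mul_sub, Matrix.sub_mul, Matrix.mul_assoc,
    nonsing_inv_mul_cancel_left _ _ hP, mul_nonsing_inv_cancel_left _ _ hP',
    nonsing_inv_mul_cancel_left _ _ hQ, mul_nonsing_inv _ hQ', Matrix.mul_one]
  abel

theorem norm_whiten_sub_whiten_le {𝕜 : Type*} [RCLike 𝕜] {P P' : Matrix m m 𝕜}
    {Q Q' : Matrix n n 𝕜} (hP : IsUnit P.det) (hP' : IsUnit P'.det) (hQ : IsUnit Q.det)
    (hQ' : IsUnit Q'.det) {S S' : Matrix m n 𝕜} (hT : ‖whiten P S Q‖ ≤ 1)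
    (hT' : ‖whiten P' S' Q'‖ ≤ 1) :
    ‖whiten P' S' Q' - whiten P S Q‖ ≤
      ‖P⁻¹ * (P - P')‖ + ‖P⁻¹ * (S' - S) * Q'⁻¹‖ + ‖(Q - Q') * Q'⁻¹‖ := by
  rw [whiten_sub_whiten hP hP' hQ hQ']
  refine norm_add₃_le.trans (add_le_add_three ?_ le_rfl ?_)
  · calc ‖P⁻¹ * (P - P') * whiten P' S' Q'‖
        ≤ ‖P⁻¹ * (P - P')‖ * ‖whiten P' S' Q'‖ := l2_opNorm_mul _ _
      _ ≤ ‖P⁻¹ * (P - P')‖ := mul_le_of_le_one_right (norm_nonneg _) hT'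
  · calc ‖whiten P S Q * ((Q - Q') * Q'⁻¹)‖
        ≤ ‖whiten P S Q‖ * ‖(Q - Q') * Q'⁻¹‖ := l2_opNorm_mul _ _
      _ ≤ ‖(Q - Q') * Q'⁻¹‖ := mul_le_of_le_one_left (norm_nonneg _) hT
end

theorem stmt_10_general {dx dy : ℕ}
    (Sxx Shxx : Matrix (Fin dx) (Fin dx) ℝ) (Syy Shyy : Matrix (Fin dy) (Fin dy) ℝ)
    (Sxy Shxy : Matrix (Fin dx) (Fin dy) ℝ)
    (hxx : Sxx.PosDef) (hhxx : Shxx.PosDef) (hyy : Syy.PosDef) (hhyy : Shyy.PosDef)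
    (T : Matrix (Fin dx) (Fin dy) ℝ)
    (hT : T = (hxx.posSemidef.sqrt)⁻¹ * Sxy * (hyy.posSemidef.sqrt)⁻¹)
    (That : Matrix (Fin dx) (Fin dy) ℝ)
    (hThat : That = (hhxx.posSemidef.sqrt)⁻¹ * Shxy * (hhyy.posSemidef.sqrt)⁻¹)
    (hT1 : specNorm T ≤ 1) (hThat1 : specNorm That ≤ 1)
    (a ν b : ℝ)
    (h1 : specNorm ((hxx.posSemidef.sqrt)⁻¹ * (hxx.posSemidef.sqrt - hhxx.posSemidef.sqrt)) ≤ a)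
    (h2 : specNorm ((hxx.posSemidef.sqrt)⁻¹ * (Shxy - Sxy) * (hhyy.posSemidef.sqrt)⁻¹) ≤ ν)
    (h3 : specNorm ((hyy.posSemidef.sqrt - hhyy.posSemidef.sqrt) * (hhyy.posSemidef.sqrt)⁻¹) ≤ b) :
    specNorm (That - T) ≤ a + ν + b ∧ |specNorm That - specNorm T| ≤ a + ν + b := by
  simp only [specNorm_eq_l2_opNorm] at hT1 hThat1 h1 h2 h3 ⊢
  subst hT hThat
  have hdiff := (norm_whiten_sub_whiten_le hxx.isUnit_det_sqrt hhxx.isUnit_det_sqrt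
    hyy.isUnit_det_sqrt hhyy.isUnit_det_sqrt hT1 hThat1).trans (add_le_add_three h1 h2 h3)
  exact ⟨hdiff, (abs_norm_sub_norm_le _ _).trans hdiff⟩

/-- deterministic perturbation bound for the whitened cross-covariance
matrix `T`, and hence for the canonical correlation `σ₁(T)`. -/
theorem stmt_10 {dx dy : ℕ}
    (Sxx Shxx : Matrix (Fin dx) (Fin dx) ℝ) (Syy Shyy : Matrix (Fin dy) (Fin dy) ℝ)
    (Sxy Shxy : Matrix (Fin dx) (Fin dy) ℝ)
    (hxx : Sxx.PosDef) (hhxx : Shxx.PosDef) (hyy : Syy.PosDef) (hhyy : Shyy.PosDef)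
    (T : Matrix (Fin dx) (Fin dy) ℝ)
    (hT : T = (hxx.posSemidef.sqrt)⁻¹ * Sxy * (hyy.posSemidef.sqrt)⁻¹)
    (That : Matrix (Fin dx) (Fin dy) ℝ)
    (hThat : That = (hhxx.posSemidef.sqrt)⁻¹ * Shxy * (hhyy.posSemidef.sqrt)⁻¹)
    (hT1 : specNorm T ≤ 1) (hThat1 : specNorm That ≤ 1)
    (a ν b : ℝ) (ha : 0 ≤ a) (hν : 0 ≤ ν) (hb : 0 ≤ b)
    (h1 : specNorm ((hxx.posSemidef.sqrt)⁻¹ * (hxx.posSemidef.sqrt - hhxx.posSemidef.sqrt)) ≤ a)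
    (h2 : specNorm ((hxx.posSemidef.sqrt)⁻¹ * (Shxy - Sxy) * (hhyy.posSemidef.sqrt)⁻¹) ≤ ν)
    (h3 : specNorm ((hyy.posSemidef.sqrt - hhyy.posSemidef.sqrt) * (hhyy.posSemidef.sqrt)⁻¹) ≤ b) :
    specNorm (That - T) ≤ a + ν + b ∧ |specNorm That - specNorm T| ≤ a + ν + b :=
  stmt_10_general Sxx Shxx Syy Shyy Sxy Shxy hxx hhxx hyy hhyy T hT That hThat hT1 hThat1 a ν b h1
    h2 h3
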